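/- In the local model, let X = Σ_h X^h X_h + Σ_h X^{h̄} X_{h̄} be a fiber-preserving vector field on TU (the components X^h depend only on x). Then for every index h, the Lie derivative of the adapted frame field X_h satisfies [X, X_h] = Σ_a (−∂_h X^a) X_a + Σ_a ( Σ_{b,c} y^b X^c K_{hcb}{}^a − Σ_b X^{b̄} Γ^a_{bh} − X_h(X^{ā}) ) X_{ā}, where X_h(X^{ā}) denotes the directional derivative of the component function X^{ā} along the vector field X_h. -/

import Mathlib

open scoped BigOperators

namespace TangentLift

/-- A point of the tangent bundle `TU = U × ℝⁿ` in coordinates `(x, y)`. -/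
abbrev Pt (n : ℕ) := (Fin n → ℝ) × (Fin n → ℝ)

variable {n : ℕ}

/-- Partial derivative `∂_i f` of a function on `ℝⁿ`. -/
noncomputable def pd (i : Fin n) (f : (Fin n → ℝ) → ℝ) (x : Fin n → ℝ) : ℝ :=
  fderiv ℝ f x (Pi.single i 1)

/-- The Christoffel symbols `Γ^k_{ij}` of a metric `g` given in coordinates. -/
noncomputable def Gam (g : (Fin n → ℝ) → Matrix (Fin n) (Fin n) ℝ)
    (k i j : Fin n) (x : Fin n → ℝ) : ℝ :=
  (1 / 2) * ∑ m, (g x)⁻¹ k m *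
    (pd i (fun z => g z m j) x + pd j (fun z => g z m i) x - pd m (fun z => g z i j) x)

/-- The curvature tensor `K_{ijk}{}^m` of the metric `g`. -/
noncomputable def Curv (g : (Fin n → ℝ) → Matrix (Fin n) (Fin n) ℝ)
    (i j k m : Fin n) (x : Fin n → ℝ) : ℝ :=
  pd i (Gam g m j k) x - pd j (Gam g m i k) x
    + ∑ a, (Gam g m i a x * Gam g a j k x - Gam g m j a x * Gam g a i k x)

/-- The horizontal adapted frame field `X_h(x,y) = ∂/∂x^h − Σ_{a,m} y^a Γ^m_{ah}(x) ∂/∂y^m`. -/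
noncomputable def XH (g : (Fin n → ℝ) → Matrix (Fin n) (Fin n) ℝ) (h : Fin n) (p : Pt n) :
    Pt n :=
  (Pi.single h 1, fun m => -∑ a, p.2 a * Gam g m a h p.1)

/-- The vertical adapted frame field `X_h̄(x,y) = ∂/∂y^h`. -/
noncomputable def XV (h : Fin n) (_p : Pt n) : Pt n := (0, Pi.single h 1)

/-- Lie bracket of vector fields on `U × ℝⁿ`: `[V,W](p) = DW(p)(V(p)) − DV(p)(W(p))`. -/
noncomputable def lie (V W : Pt n → Pt n) (p : Pt n) : Pt n :=
  fderiv ℝ W p (V p) - fderiv ℝ V p (W p)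

/-- Directional derivative of a function on `TU` along the vector field `Z`. -/
noncomputable def dirD (Z : Pt n → Pt n) (f : Pt n → ℝ) (p : Pt n) : ℝ :=
  fderiv ℝ f p (Z p)

/-- The vertical components of a tangent vector `v` at `p` in the adapted frame,
i.e. the coefficients of the `X_m̄` in the expansion of `v`. -/
noncomputable def ver (g : (Fin n → ℝ) → Matrix (Fin n) (Fin n) ℝ) (p : Pt n) (v : Pt n) :
    Fin n → ℝ :=
  fun m => v.2 m + ∑ a, ∑ i, p.2 a * Gam g m a i p.1 * v.1 i

/-- The bilinear-form field `g₁` on `TU`: `g₁(X_i,X_j) = g_{ij}`, vanishing on vertical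
arguments. -/
noncomputable def g1 (g : (Fin n → ℝ) → Matrix (Fin n) (Fin n) ℝ) (p : Pt n) (v w : Pt n) : ℝ :=
  ∑ i, ∑ j, g p.1 i j * v.1 i * w.1 j

/-- The bilinear-form field `g₂` on `TU`: `g₂(X_i,X_j̄) = g₂(X_j̄,X_i) = g_{ij}`, vanishing on
two horizontal or two vertical arguments. -/
noncomputable def g2 (g : (Fin n → ℝ) → Matrix (Fin n) (Fin n) ℝ) (p : Pt n) (v w : Pt n) : ℝ :=
  ∑ i, ∑ j, g p.1 i j * (v.1 i * ver g p w j + w.1 i * ver g p v j)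

/-- The bilinear-form field `g₃` on `TU`: `g₃(X_ī,X_j̄) = g_{ij}`, vanishing on horizontal
arguments. -/
noncomputable def g3 (g : (Fin n → ℝ) → Matrix (Fin n) (Fin n) ℝ) (p : Pt n) (v w : Pt n) : ℝ :=
  ∑ i, ∑ j, g p.1 i j * ver g p v i * ver g p w j

/-- The lift metric `g̃ = a g₁ + b g₂ + c g₃` on `TU`. -/
noncomputable def gLift (g : (Fin n → ℝ) → Matrix (Fin n) (Fin n) ℝ) (a b c : ℝ)
    (p : Pt n) (v w : Pt n) : ℝ :=
  a * g1 g p v w + b * g2 g p v w + c * g3 g p v w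

/-- Lie derivative of a field `S` of bilinear forms along the vector field `X`, evaluated on
the vector fields `V`, `W` at the point `p`:
`(L_X S)(V,W) = X·(S(V,W)) − S([X,V],W) − S(V,[X,W])`. -/
noncomputable def lieDer (X : Pt n → Pt n) (S : Pt n → Pt n → Pt n → ℝ)
    (V W : Pt n → Pt n) (p : Pt n) : ℝ :=
  dirD X (fun q => S q (V q) (W q)) p - S p (lie X V p) (W p) - S p (V p) (lie X W p)

/-- `g` is a Riemannian metric on `U` given in coordinates: each component is smooth on `U`,
and at each point of `U` the matrix `(g_{ij})` is symmetric positive definite. -/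
def IsMetric (U : Set (Fin n → ℝ)) (g : (Fin n → ℝ) → Matrix (Fin n) (Fin n) ℝ) : Prop :=
  (∀ i j, ContDiffOn ℝ (⊤ : ℕ∞) (fun x => g x i j) U) ∧
    (∀ x ∈ U, (g x).IsSymm) ∧ (∀ x ∈ U, (g x).PosDef)

/-- The vector field `X = Σ_h X^h X_h + Σ_h X^h̄ X_h̄` on `TU` with the given components in
the adapted frame; for a fiber-preserving field the `X^h` are functions of `x` alone. -/
noncomputable def mkVF (g : (Fin n → ℝ) → Matrix (Fin n) (Fin n) ℝ)
    (Xh' : Fin n → (Fin n → ℝ) → ℝ) (Xv' : Fin n → Pt n → ℝ) (p : Pt n) : Pt n :=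
  (∑ h, Xh' h p.1 • XH g h p) + ∑ h, Xv' h p • XV h p

/-- Smoothness of the components of a fiber-preserving vector field on `TU`. -/
def SmoothComponents (U : Set (Fin n → ℝ)) (Xh' : Fin n → (Fin n → ℝ) → ℝ)
    (Xv' : Fin n → Pt n → ℝ) : Prop :=
  (∀ h, ContDiffOn ℝ (⊤ : ℕ∞) (Xh' h) U) ∧ (∀ h, ContDiffOn ℝ (⊤ : ℕ∞) (Xv' h) (U ×ˢ Set.univ))

/-- `X` is a conformal vector field for the lift metric `g̃ = a g₁ + b g₂ + c g₃` with
conformal factor `Ω`, i.e. `L_X g̃ = 2 Ω g̃` as fields of bilinear forms on `TU`, tested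
against all smooth vector fields on `TU`. -/
def Conformal (U : Set (Fin n → ℝ)) (g : (Fin n → ℝ) → Matrix (Fin n) (Fin n) ℝ)
    (a b c : ℝ) (X : Pt n → Pt n) (Ω : Pt n → ℝ) : Prop :=
  ∀ V W : Pt n → Pt n, ContDiffOn ℝ (⊤ : ℕ∞) V (U ×ˢ Set.univ) → ContDiffOn ℝ (⊤ : ℕ∞) W (U ×ˢ Set.univ) →
    ∀ p : Pt n, p.1 ∈ U →
      lieDer X (gLift g a b c) V W p = 2 * Ω p * gLift g a b c p (V p) (W p)

/-- The components `(L_V g)_{ij}` of the Lie derivative of `g` along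
`V = Σ_h V^h ∂/∂x^h` on `U`. -/
noncomputable def lieG (g : (Fin n → ℝ) → Matrix (Fin n) (Fin n) ℝ)
    (Vf : Fin n → (Fin n → ℝ) → ℝ) (i j : Fin n) (x : Fin n → ℝ) : ℝ :=
  ∑ a, (Vf a x * pd a (fun z => g z i j) x + pd i (Vf a) x * g x a j + pd j (Vf a) x * g x i a)

/-- The covariant derivative `∇_i V^m = ∂_i V^m + Σ_a Γ^m_{ia} V^a`. -/
noncomputable def covD (g : (Fin n → ℝ) → Matrix (Fin n) (Fin n) ℝ)
    (Vf : Fin n → (Fin n → ℝ) → ℝ) (i m : Fin n) (x : Fin n → ℝ) : ℝ :=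
  pd i (Vf m) x + ∑ a, Gam g m i a x * Vf a x

/-- The complete lift `X^C = Σ_h V^h X_h + Σ_{h,m} y^m (Σ_a Γ^h_{ma} V^a + ∂_m V^h) X_h̄`
of the vector field `V = Σ_h V^h ∂/∂x^h` on `U`. -/
noncomputable def completeLift (g : (Fin n → ℝ) → Matrix (Fin n) (Fin n) ℝ)
    (Vf : Fin n → (Fin n → ℝ) → ℝ) (p : Pt n) : Pt n :=
  (∑ h, Vf h p.1 • XH g h p)
    + ∑ h, (∑ m, p.2 m * ((∑ a, Gam g h m a p.1 * Vf a p.1) + pd m (Vf h) p.1)) • XV h p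

/-- The vertical lift `X^V = Σ_h V^h X_h̄` of `V = Σ_h V^h ∂/∂x^h`. -/
noncomputable def vertLift (Vf : Fin n → (Fin n → ℝ) → ℝ) (p : Pt n) : Pt n :=
  ∑ h, Vf h p.1 • XV h p

/-- The horizontal lift `X^H = Σ_h V^h X_h` of `V = Σ_h V^h ∂/∂x^h`. -/
noncomputable def horLift (g : (Fin n → ℝ) → Matrix (Fin n) (Fin n) ℝ)
    (Vf : Fin n → (Fin n → ℝ) → ℝ) (p : Pt n) : Pt n :=
  ∑ h, Vf h p.1 • XH g h p

theorem pd_def (i : Fin n) (f : (Fin n → ℝ) → ℝ) (x : Fin n → ℝ) :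
    fderiv ℝ f x (Pi.single i 1) = pd i f x := rfl

theorem differentiableAt_pd {U : Set (Fin n → ℝ)} (hU : IsOpen U) {f : (Fin n → ℝ) → ℝ}
    (hf : ContDiffOn ℝ (⊤ : ℕ∞) f U) (i : Fin n) {x : Fin n → ℝ} (hx : x ∈ U) :
    DifferentiableAt ℝ (pd i f) x := by
  have h1 : ContDiffOn ℝ 1 (fderiv ℝ f) U := hf.fderiv_of_isOpen hU (WithTop.coe_le_coe.mpr le_top)
  have h2 : ContDiffOn ℝ 1 (pd i f) U := h1.clm_apply contDiffOn_const
  exact (h2.differentiableOn one_ne_zero).differentiableAt (hU.mem_nhds hx)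

theorem diffAt_det {x : Fin n → ℝ} {g : (Fin n → ℝ) → Matrix (Fin n) (Fin n) ℝ}
    (hg : ∀ i j, DifferentiableAt ℝ (fun z => g z i j) x) :
    DifferentiableAt ℝ (fun z => (g z).det) x := by
  simp only [Matrix.det_apply, Units.smul_def, zsmul_eq_mul]
  apply DifferentiableAt.fun_sum
  intro σ _
  exact (differentiableAt_const _).mul
    (HasFDerivAt.finset_prod fun i _ => (hg (σ i) i).hasFDerivAt).differentiableAt

theorem diffAt_inv_entry {U : Set (Fin n → ℝ)} (hU : IsOpen U)
    {g : (Fin n → ℝ) → Matrix (Fin n) (Fin n) ℝ}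
    (hg : ∀ i j, ContDiffOn ℝ (⊤ : ℕ∞) (fun z => g z i j) U)
    (hpd : ∀ z ∈ U, (g z).PosDef) {x : Fin n → ℝ} (hx : x ∈ U) (k m : Fin n) :
    DifferentiableAt ℝ (fun z => (g z)⁻¹ k m) x := by
  have hent : ∀ i j, DifferentiableAt ℝ (fun z => g z i j) x := fun i j =>
    ((hg i j).differentiableOn (by simp)).differentiableAt (hU.mem_nhds hx)
  have hdet : DifferentiableAt ℝ (fun z => (g z).det) x := diffAt_det hent
  have hadj : DifferentiableAt ℝ (fun z => (g z).adjugate k m) x := by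
    simp only [Matrix.adjugate_apply]
    apply diffAt_det
    intro i j
    rcases eq_or_ne i m with rfl | hi
    · simp only [Matrix.updateRow_self]
      exact differentiableAt_const _
    · simp only [Matrix.updateRow_ne hi]
      exact hent i j
  have heq : (fun z => (g z)⁻¹ k m) =ᶠ[nhds x] fun z => ((g z).det)⁻¹ * (g z).adjugate k m := by
    filter_upwards [hU.mem_nhds hx] with z _
    rw [Matrix.inv_def, Ring.inverse_eq_inv']
    simp [Matrix.smul_apply, smul_eq_mul]
  rw [Filter.EventuallyEq.differentiableAt_iff heq]
  exact (hdet.inv (hpd x hx).det_pos.ne').mul hadj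

theorem differentiableAt_gam {U : Set (Fin n → ℝ)} (hU : IsOpen U)
    {g : (Fin n → ℝ) → Matrix (Fin n) (Fin n) ℝ} (hg : IsMetric U g)
    (k i j : Fin n) {x : Fin n → ℝ} (hx : x ∈ U) :
    DifferentiableAt ℝ (Gam g k i j) x := by
  unfold Gam
  apply DifferentiableAt.const_mul
  apply DifferentiableAt.fun_sum
  intro m _
  exact (diffAt_inv_entry hU hg.1 hg.2.2 hx k m).mul
    (((differentiableAt_pd hU (hg.1 m j) i hx).add
      (differentiableAt_pd hU (hg.1 m i) j hx)).sub
      (differentiableAt_pd hU (hg.1 i j) m hx))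

theorem gam_symm {U : Set (Fin n → ℝ)} (hU : IsOpen U)
    {g : (Fin n → ℝ) → Matrix (Fin n) (Fin n) ℝ} (hg : IsMetric U g)
    (k i j : Fin n) {x : Fin n → ℝ} (hx : x ∈ U) :
    Gam g k i j x = Gam g k j i x := by
  have h1 : (fun z => g z i j) =ᶠ[nhds x] (fun z => g z j i) := by
    filter_upwards [hU.mem_nhds hx] with z hz
    exact ((hg.2.1 z hz).apply i j).symm
  unfold Gam
  congr 1
  apply Finset.sum_congr rfl
  intro m _
  have h2 : pd m (fun z => g z i j) x = pd m (fun z => g z j i) x := by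
    unfold pd
    rw [h1.fderiv_eq]
  rw [h2]
  ring

theorem pd_gam_symm {U : Set (Fin n → ℝ)} (hU : IsOpen U)
    {g : (Fin n → ℝ) → Matrix (Fin n) (Fin n) ℝ} (hg : IsMetric U g)
    (c k i j : Fin n) {x : Fin n → ℝ} (hx : x ∈ U) :
    pd c (Gam g k i j) x = pd c (Gam g k j i) x := by
  have h1 : Gam g k i j =ᶠ[nhds x] Gam g k j i := by
    filter_upwards [hU.mem_nhds hx] with z hz
    exact gam_symm hU hg k i j hz
  unfold pd
  rw [h1.fderiv_eq]

theorem clm_apply_eq_sum (L : (Fin n → ℝ) →L[ℝ] ℝ) (v : Fin n → ℝ) :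
    L v = ∑ i, v i * L (Pi.single i 1) := by
  have hv : v = ∑ i, v i • (Pi.single i (1:ℝ) : Fin n → ℝ) := by
    funext j
    simp [Finset.sum_apply, Pi.single_apply]
  conv_lhs => rw [hv]
  rw [map_sum]
  simp [smul_eq_mul]


theorem mkVF_eq (g : (Fin n → ℝ) → Matrix (Fin n) (Fin n) ℝ)
    (Xh' : Fin n → (Fin n → ℝ) → ℝ) (Xv' : Fin n → Pt n → ℝ) :
    mkVF g Xh' Xv' = fun q : Pt n =>
      ((fun i => Xh' i q.1),
       (fun m => Xv' m q - ∑ c, ∑ b, Xh' c q.1 * (q.2 b * Gam g m b c q.1))) := by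
  funext q
  unfold mkVF XH XV
  refine Prod.ext ?_ ?_
  · simp only [Prod.fst_add, Prod.fst_sum, Prod.smul_fst]
    funext i
    simp [Finset.sum_apply, Pi.single_apply, mul_ite, Finset.sum_ite_eq']
  · simp only [Prod.snd_add, Prod.snd_sum, Prod.smul_snd]
    funext m
    simp only [Pi.add_apply, Finset.sum_apply, Pi.smul_apply, smul_eq_mul, Pi.single_apply,
      mul_ite, mul_one, mul_zero, Finset.sum_ite_eq', Finset.sum_ite_eq, Finset.mem_univ, if_true, mul_neg,
      neg_mul, Finset.mul_sum, Finset.sum_neg_distrib, sub_eq_add_neg]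
    ring

theorem sum3_comm (f : Fin n → Fin n → Fin n → ℝ) :
    ∑ a, ∑ c, ∑ b, f a c b = ∑ b, ∑ c, ∑ a, f a c b := by
  calc ∑ a, ∑ c, ∑ b, f a c b = ∑ a, ∑ b, ∑ c, f a c b :=
        Finset.sum_congr rfl fun a _ => Finset.sum_comm
    _ = ∑ b, ∑ a, ∑ c, f a c b := Finset.sum_comm
    _ = ∑ b, ∑ c, ∑ a, f a c b := Finset.sum_congr rfl fun b _ => Finset.sum_comm

theorem key_algebra (A y S D : Fin n → ℝ) (G : Fin n → Fin n → Fin n → ℝ)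
    (P : Fin n → Fin n → Fin n → Fin n → ℝ) (dd : ℝ) (h m : Fin n)
    (hG : ∀ k i j, G k i j = G k j i) (hP : ∀ c k i j, P c k i j = P c k j i) :
    (-∑ a, (y a * ∑ c, A c * P c m a h + G m a h * (S a - ∑ c, ∑ b, A c * (y b * G a b c))))
      - (dd - ∑ c, ∑ b, (A c * (y b * P h m b c + G m b c * -∑ a, y a * G b a h)
          + y b * G m b c * D c))
    = ∑ c, -D c * -∑ b, y b * G m b c
      + ((∑ b, ∑ c, y b * A c * (P h m c b - P c m h b
            + ∑ a, (G m h a * G a c b - G m c a * G a h b)))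
        - ∑ b, S b * G m b h - dd) := by
  have h1 : ∑ a : Fin n, ∑ c : Fin n, y a * (A c * P c m a h)
      = ∑ b : Fin n, ∑ c : Fin n, y b * A c * P c m h b := by
    refine Finset.sum_congr rfl fun a _ => Finset.sum_congr rfl fun c _ => ?_
    rw [hP c m h a]; ring
  have h2 : ∑ a : Fin n, G m a h * S a = ∑ b : Fin n, S b * G m b h := by
    refine Finset.sum_congr rfl fun a _ => ?_; ring
  have h3 : ∑ a : Fin n, ∑ c : Fin n, ∑ b : Fin n, G m a h * (A c * (y b * G a b c))
      = ∑ b : Fin n, ∑ c : Fin n, ∑ a : Fin n, y b * A c * (G m h a * G a c b) := by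
    rw [sum3_comm]
    refine Finset.sum_congr rfl fun b _ => Finset.sum_congr rfl fun c _ =>
      Finset.sum_congr rfl fun a _ => ?_
    rw [hG m h a, hG a c b]; ring
  have h4 : ∑ c : Fin n, ∑ b : Fin n, A c * (y b * P h m b c)
      = ∑ b : Fin n, ∑ c : Fin n, y b * A c * P h m c b := by
    rw [Finset.sum_comm]
    refine Finset.sum_congr rfl fun b _ => Finset.sum_congr rfl fun c _ => ?_
    rw [hP h m c b]; ring
  have h5 : ∑ c : Fin n, ∑ b : Fin n, ∑ a : Fin n, A c * (G m b c * (y a * G b a h))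
      = ∑ b : Fin n, ∑ c : Fin n, ∑ a : Fin n, y b * A c * (G m c a * G a h b) := by
    calc ∑ c : Fin n, ∑ b : Fin n, ∑ a : Fin n, A c * (G m b c * (y a * G b a h))
        = ∑ c : Fin n, ∑ a : Fin n, ∑ b : Fin n, A c * (G m b c * (y a * G b a h)) :=
          Finset.sum_congr rfl fun c _ => Finset.sum_comm
      _ = ∑ a : Fin n, ∑ c : Fin n, ∑ b : Fin n, A c * (G m b c * (y a * G b a h)) :=
          Finset.sum_comm
      _ = ∑ b : Fin n, ∑ c : Fin n, ∑ a : Fin n, y b * A c * (G m c a * G a h b) := by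
          refine Finset.sum_congr rfl fun a _ => Finset.sum_congr rfl fun c _ =>
            Finset.sum_congr rfl fun b _ => ?_
          rw [hG m c b, hG b h a]; ring
  have h6 : ∑ c : Fin n, ∑ b : Fin n, y b * G m b c * D c
      = ∑ c : Fin n, ∑ b : Fin n, D c * (y b * G m b c) := by
    refine Finset.sum_congr rfl fun c _ => Finset.sum_congr rfl fun b _ => ?_; ring
  simp only [mul_sub, mul_add, mul_neg, neg_mul, sub_eq_add_neg, neg_add, neg_neg,
    Finset.sum_add_distrib, Finset.sum_neg_distrib, Finset.mul_sum, Finset.sum_mul]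
  linear_combination -h1 - h2 + h3 + h4 - h5 + h6

/-- For a fiber-preserving vector field `X = Σ X^h X_h + Σ X^h̄ X_h̄`,
`[X, X_h] = Σ_a (−∂_h X^a) X_a + Σ_a (Σ_{b,c} y^b X^c K_{hcb}{}^a − Σ_b X^b̄ Γ^a_{bh} − X_h(X^ā)) X_ā`. -/
theorem lieDer_adapted_horizontal (n : ℕ) (hn : 1 ≤ n) (U : Set (Fin n → ℝ)) (hU : IsOpen U)
    (g : (Fin n → ℝ) → Matrix (Fin n) (Fin n) ℝ) (hg : IsMetric U g)
    (Xh' : Fin n → (Fin n → ℝ) → ℝ) (Xv' : Fin n → Pt n → ℝ)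
    (hX : SmoothComponents U Xh' Xv')
    (h : Fin n) (p : Pt n) (hp : p.1 ∈ U) :
    lie (mkVF g Xh' Xv') (XH g h) p
      = (∑ a, (-(pd h (Xh' a) p.1)) • XH g a p)
        + ∑ a, ((∑ b, ∑ c, p.2 b * Xh' c p.1 * Curv g h c b a p.1)
            - (∑ b, Xv' b p * Gam g a b h p.1) - dirD (XH g h) (Xv' a) p) • XV a p := by
  have hGamD : ∀ k i j : Fin n, DifferentiableAt ℝ (Gam g k i j) p.1 :=
    fun k i j => differentiableAt_gam hU hg k i j hp
  have hXhD : ∀ c, DifferentiableAt ℝ (Xh' c) p.1 :=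
    fun c => ((hX.1 c).differentiableOn (by simp)).differentiableAt (hU.mem_nhds hp)
  have hpmem : p ∈ U ×ˢ (Set.univ : Set (Fin n → ℝ)) := ⟨hp, trivial⟩
  have hXvD : ∀ m, DifferentiableAt ℝ (Xv' m) p := fun m =>
    ((hX.2 m).differentiableOn (by simp)).differentiableAt ((hU.prod isOpen_univ).mem_nhds hpmem)
  have hW : HasFDerivAt (XH g h)
      ((0 : Pt n →L[ℝ] (Fin n → ℝ)).prod (ContinuousLinearMap.pi fun m =>
        -(∑ a : Fin n, (p.2 a • ((fderiv ℝ (Gam g m a h) p.1).comp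
              (ContinuousLinearMap.fst ℝ (Fin n → ℝ) (Fin n → ℝ)))
            + Gam g m a h p.1 • ((ContinuousLinearMap.proj a).comp
              (ContinuousLinearMap.snd ℝ (Fin n → ℝ) (Fin n → ℝ))))))) p := by
    unfold XH
    apply HasFDerivAt.prodMk
    · exact hasFDerivAt_const _ _
    · refine hasFDerivAt_pi.mpr fun m => ?_
      refine HasFDerivAt.neg ?_
      refine HasFDerivAt.fun_sum fun a _ => ?_
      exact HasFDerivAt.mul
        (((ContinuousLinearMap.proj a).comp
          (ContinuousLinearMap.snd ℝ (Fin n → ℝ) (Fin n → ℝ))).hasFDerivAt)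
        (((hGamD m a h).hasFDerivAt).comp p hasFDerivAt_fst)
  have hV : HasFDerivAt (fun q : Pt n =>
      ((fun i => Xh' i q.1),
       (fun m => Xv' m q - ∑ c, ∑ b, Xh' c q.1 * (q.2 b * Gam g m b c q.1))) : Pt n → Pt n)
      ((ContinuousLinearMap.pi fun i => (fderiv ℝ (Xh' i) p.1).comp
          (ContinuousLinearMap.fst ℝ (Fin n → ℝ) (Fin n → ℝ))).prod
        (ContinuousLinearMap.pi fun m => fderiv ℝ (Xv' m) p - ∑ c : Fin n, ∑ b : Fin n,
          (Xh' c p.1 • (p.2 b • ((fderiv ℝ (Gam g m b c) p.1).comp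
                (ContinuousLinearMap.fst ℝ (Fin n → ℝ) (Fin n → ℝ)))
              + Gam g m b c p.1 • ((ContinuousLinearMap.proj b).comp
                (ContinuousLinearMap.snd ℝ (Fin n → ℝ) (Fin n → ℝ))))
            + (p.2 b * Gam g m b c p.1) • ((fderiv ℝ (Xh' c) p.1).comp
                (ContinuousLinearMap.fst ℝ (Fin n → ℝ) (Fin n → ℝ)))))) p := by
    apply HasFDerivAt.prodMk
    · refine hasFDerivAt_pi.mpr fun i => ?_
      exact ((hXhD i).hasFDerivAt).comp p hasFDerivAt_fst
    · refine hasFDerivAt_pi.mpr fun m => ?_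
      refine HasFDerivAt.sub ((hXvD m).hasFDerivAt) ?_
      refine HasFDerivAt.fun_sum fun c _ => ?_
      refine HasFDerivAt.fun_sum fun b _ => ?_
      exact HasFDerivAt.mul (((hXhD c).hasFDerivAt).comp p hasFDerivAt_fst)
        (HasFDerivAt.mul
          (((ContinuousLinearMap.proj b).comp
            (ContinuousLinearMap.snd ℝ (Fin n → ℝ) (Fin n → ℝ))).hasFDerivAt)
          (((hGamD m b c).hasFDerivAt).comp p hasFDerivAt_fst))
  rw [mkVF_eq g Xh' Xv']
  unfold lie
  rw [hW.fderiv, hV.fderiv]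
  refine Prod.ext ?_ ?_
  · funext i
    simp only [ContinuousLinearMap.prod_apply, Prod.fst_sub, Prod.snd_sub,
      ContinuousLinearMap.pi_apply, ContinuousLinearMap.zero_apply, Pi.sub_apply,
      ContinuousLinearMap.coe_comp', Function.comp_apply, ContinuousLinearMap.coe_fst',
      XH, XV, Prod.fst_add, Prod.fst_sum, Prod.smul_fst, Finset.sum_apply, Pi.smul_apply,
      smul_eq_mul, Pi.single_apply, mul_ite, mul_one, mul_zero, Finset.sum_ite_eq',
      Finset.mem_univ, if_true, pd_def, Pi.zero_apply]
    simp [Pi.add_apply, Finset.sum_apply, Pi.smul_apply, Pi.single_apply, smul_eq_mul,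
      mul_ite, Finset.sum_ite_eq', smul_zero]
  · funext m
    simp only [ContinuousLinearMap.prod_apply, Prod.fst_sub, Prod.snd_sub,
      ContinuousLinearMap.pi_apply, ContinuousLinearMap.zero_apply, Pi.sub_apply,
      ContinuousLinearMap.neg_apply, ContinuousLinearMap.coe_sum', Finset.sum_apply,
      ContinuousLinearMap.add_apply, ContinuousLinearMap.coe_smul', Pi.smul_apply,
      ContinuousLinearMap.coe_sub', ContinuousLinearMap.coe_comp', Function.comp_apply,
      ContinuousLinearMap.coe_fst', ContinuousLinearMap.coe_snd',
      ContinuousLinearMap.proj_apply, smul_eq_mul,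
      XH, XV, Prod.snd_add, Prod.snd_sum, Prod.smul_snd, Pi.single_apply, mul_ite, mul_one,
      mul_zero, Finset.sum_ite_eq', Finset.sum_ite_eq, Finset.mem_univ, if_true, pd_def,
      Pi.zero_apply]
    simp only [Pi.add_apply, Finset.sum_apply, Pi.smul_apply, smul_eq_mul, Pi.single_apply,
      mul_ite, mul_one, mul_zero, Finset.sum_ite_eq, Finset.sum_ite_eq', Finset.mem_univ,
      if_true]
    rw [show (fderiv ℝ (Xv' m) p) (Pi.single h (1:ℝ),
        fun m => -∑ a : Fin n, p.2 a * Gam g m a h p.1) = dirD (XH g h) (Xv' m) p from rfl]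
    have hexp : ∀ k a b : Fin n, (fderiv ℝ (Gam g k a b) p.1) (fun i => Xh' i p.1)
        = ∑ c, Xh' c p.1 * pd c (Gam g k a b) p.1 := by
      intro k a b
      rw [clm_apply_eq_sum]
      rfl
    simp only [hexp, Curv]
    exact key_algebra (fun c => Xh' c p.1) p.2 (fun a => Xv' a p)
      (fun c => pd h (Xh' c) p.1) (fun k i j => Gam g k i j p.1)
      (fun c k i j => pd c (Gam g k i j) p.1) (dirD (XH g h) (Xv' m) p) h m
      (fun k i j => gam_symm hU hg k i j hp) (fun c k i j => pd_gam_symm hU hg c k i j hp)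

end TangentLift
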